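/- arXiv:1808.04964 — 2 statements merged into one kernel-verified Lean document; each statement's English description precedes it below -/
import Mathlib

section
/- (Theorem 3.) Define θ₁ = sup{γ ∈ ℝ : ∑_{n≥0} e^{γn}·(∑_{y∈S} B^n(z,y)) < ∞} and θ₂ = sup{γ ∈ ℝ : ∑_{n≥0} e^{γn}·(∑_{y∈S} g_n(y)) < ∞}. If θ₂ > θ₁, then there exists θ ≥ 0 with θ < θ₂ such that ∑_{n≥1} e^{θn}·f_n(z) = 1 (assumption A1) and ∑_{n≥1} n·e^{θn}·f_n(z) < ∞ (assumption A2). -/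
/-- Matrix powers: `B^0 = I`, `B^{n+1}(x,y) = ∑_w B^n(x,w) B(w,y)`. -/
noncomputable def matPow {S : Type*} [DecidableEq S] (B : S → S → ℝ) : ℕ → S → S → ℝ
  | 0 => fun x y => if x = y then (1 : ℝ) else 0
  | n + 1 => fun x y => ∑' w, matPow B n x w * B w y

/-- First-return quantities: `fret B z n x` is the probability that the killed chain
with sub-stochastic transition matrix `B`, started at `x`, first hits `z` at time `n`
without having been killed: `f_1(x) = B(x,z)`, `f_{n+1}(x) = ∑_{w ≠ z} B(x,w) f_n(w)`.
(The value at `n = 0` is set to `0` by convention.) -/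
noncomputable def fret {S : Type*} [DecidableEq S] (B : S → S → ℝ) (z : S) : ℕ → S → ℝ
  | 0 => fun _ => 0
  | 1 => fun x => B x z
  | n + 2 => fun x => ∑' w, if w = z then 0 else B x w * fret B z (n + 1) w

/-- `grow B z j y` is the probability that the killed chain started at `z` is at `y`
at time `j` without having been killed or having returned to `z`:
`g_0 = δ_z`, and for `j ≥ 1`, `g_j(z) = 0` and `g_j(y) = ∑_x g_{j-1}(x) B(x,y)` for `y ≠ z`. -/
noncomputable def grow {S : Type*} [DecidableEq S] (B : S → S → ℝ) (z : S) : ℕ → S → ℝ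
  | 0 => fun y => if y = z then 1 else 0
  | j + 1 => fun y => if y = z then 0 else ∑' x, grow B z j x * B x y

/-- The Perron-Frobenius column eigenvector candidate
`u*(x) = ∑_{n ≥ 1} e^{θ n} f_n(x)`. -/
noncomputable def uStar {S : Type*} [DecidableEq S] (B : S → S → ℝ) (z : S) (θ : ℝ)
    (x : S) : ℝ :=
  ∑' n : ℕ, Real.exp (θ * ((n : ℝ) + 1)) * fret B z (n + 1) x

/-- The Perron-Frobenius row eigenvector candidate
`η*(y) = ∑_{j ≥ 0} e^{θ j} g_j(y)`. -/
noncomputable def etaStar {S : Type*} [DecidableEq S] (B : S → S → ℝ) (z : S) (θ : ℝ)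
    (y : S) : ℝ :=
  ∑' j : ℕ, Real.exp (θ * (j : ℝ)) * grow B z j y

/-!
Write `a n = ∑_y B^n(z,y)`, `b n = ∑_y g_n(y)` and `f n = f_n(z)`. Splitting a path from `z` at
its first return to `z` gives the renewal equation `a n = b n + ∑_{i+j=n} f i * a j`, and a first
return at time `n + 1` is a surviving `z`-avoiding path of length `n` followed by one step, so
`f (n+1) ≤ b n`. Since `a n ≤ 1`, `θ₁ ≥ 0`; pick `θ₁ < γ₀ < γ₁ < θ₂`. The series
`F γ = ∑ e^{γ n} f n` converges for `γ < θ₂` and `F 0 ≤ 1`. If `F γ₀ < 1`, the renewal equation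
bounds the partial sums of `∑ e^{γ₀ n} a n` by `(∑ e^{γ₀ n} b n) / (1 - F γ₀)`, contradicting
`γ₀ > θ₁`. So `F θ = 1` for some `θ ∈ [0, γ₀]`, and A2 holds because `F γ₁ < ∞` with `γ₁ > θ`.

The path identities are proved for the `ℝ≥0∞`-valued kernel, where all series converge and can be
interchanged freely, and then transferred to `ℝ`.
-/

open Finset Real
open scoped ENNReal

def expSummableSet (c : ℕ → ℝ) : Set ℝ :=
  {γ | Summable fun n : ℕ => Real.exp (γ * n) * c n}

section ExpSummableSet

variable {c : ℕ → ℝ}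

lemma mem_expSummableSet_of_le (hc : 0 ≤ c) {γ γ' : ℝ} (h : γ ∈ expSummableSet c)
    (hle : γ' ≤ γ) : γ' ∈ expSummableSet c :=
  Summable.of_nonneg_of_le (fun n => mul_nonneg (exp_pos _).le (hc n))
    (fun n => mul_le_mul_of_nonneg_right
      (exp_le_exp.2 (mul_le_mul_of_nonneg_right hle n.cast_nonneg)) (hc n)) h

lemma mem_expSummableSet_of_lt_sSup (hc : 0 ≤ c) {γ : ℝ}
    (h : (γ : EReal) < sSup ((↑) '' expSummableSet c)) : γ ∈ expSummableSet c := by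
  obtain ⟨_, ⟨γ', hγ', rfl⟩, hlt⟩ := lt_sSup_iff.1 h
  exact mem_expSummableSet_of_le hc hγ' (EReal.coe_lt_coe_iff.1 hlt).le

lemma zero_le_sSup_expSummableSet (hc0 : 0 ≤ c) (hc1 : c ≤ 1) :
    0 ≤ sSup ((↑) '' expSummableSet c : Set EReal) := by
  by_contra! h
  obtain ⟨q, hq, hq0⟩ := EReal.exists_between_coe_real h
  have hq0 : q < 0 := EReal.coe_lt_coe_iff.1 hq0
  have hmem : q ∈ expSummableSet c := by
    refine Summable.of_nonneg_of_le (fun n => mul_nonneg (exp_pos _).le (hc0 n)) (fun n => ?_)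
      (summable_geometric_of_lt_one (exp_pos q).le (exp_lt_one_iff.2 hq0))
    rw [← exp_nat_mul, mul_comm (n : ℝ)]
    exact mul_le_of_le_one_right (exp_pos _).le (hc1 n)
  exact (le_sSup (Set.mem_image_of_mem (fun γ : ℝ => (γ : EReal)) hmem)).not_gt hq

end ExpSummableSet

lemma sum_range_sum_antidiagonal_le {u v : ℕ → ℝ} (hu : 0 ≤ u) (hv : 0 ≤ v) (N : ℕ) :
    ∑ n ∈ range N, ∑ p ∈ antidiagonal n, u p.1 * v p.2
      ≤ (∑ i ∈ range N, u i) * ∑ j ∈ range N, v j := by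
  calc ∑ n ∈ range N, ∑ p ∈ antidiagonal n, u p.1 * v p.2
      = ∑ n ∈ range N, ∑ p ∈ range N ×ˢ range N with p.1 + p.2 = n, u p.1 * v p.2 := by
        refine sum_congr rfl fun n hn => sum_congr ?_ fun _ _ => rfl
        ext p
        simp only [HasAntidiagonal.mem_antidiagonal, mem_filter, mem_product, mem_range] at hn ⊢
        omega
    _ ≤ ∑ p ∈ range N ×ˢ range N, u p.1 * v p.2 :=
        sum_fiberwise_le_sum_of_sum_fiber_nonneg fun _ _ =>
          sum_nonneg fun p _ => mul_nonneg (hu p.1) (hv p.2)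
    _ = (∑ i ∈ range N, u i) * ∑ j ∈ range N, v j := by
        rw [sum_product, sum_mul_sum]

lemma mul_exp_le_exp_div_sub {θ γ : ℝ} (h : θ < γ) (t : ℝ) :
    t * exp (θ * t) ≤ exp (γ * t) / (γ - θ) := by
  have hδ : 0 < γ - θ := sub_pos.2 h
  have ht : t ≤ exp ((γ - θ) * t) / (γ - θ) := by
    rw [le_div_iff₀ hδ]
    linarith [add_one_le_exp ((γ - θ) * t)]
  calc t * exp (θ * t) ≤ exp ((γ - θ) * t) / (γ - θ) * exp (θ * t) :=
        mul_le_mul_of_nonneg_right ht (exp_pos _).le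
    _ = exp (γ * t) / (γ - θ) := by
        rw [div_mul_eq_mul_div, ← exp_add]; ring_nf

section TiltedSeries

variable {c : ℕ → ℝ}

lemma continuousOn_tsum_exp_mul (hc : 0 ≤ c) {γ : ℝ}
    (h : Summable fun n : ℕ => exp (γ * (n + 1)) * c n) :
    ContinuousOn (fun θ => ∑' n : ℕ, exp (θ * (n + 1)) * c n) (Set.Iic γ) := by
  refine continuousOn_tsum (fun n => by fun_prop) h fun n θ hθ => ?_
  rw [norm_of_nonneg (mul_nonneg (exp_pos _).le (hc n))]
  exact mul_le_mul_of_nonneg_right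
    (exp_le_exp.2 (mul_le_mul_of_nonneg_right hθ (by positivity))) (hc n)

lemma summable_succ_mul_exp_mul (hc : 0 ≤ c) {θ γ : ℝ} (hθγ : θ < γ)
    (h : Summable fun n : ℕ => exp (γ * (n + 1)) * c n) :
    Summable fun n : ℕ => ((n : ℝ) + 1) * exp (θ * (n + 1)) * c n := by
  refine Summable.of_nonneg_of_le (fun n => mul_nonneg (by positivity) (hc n)) (fun n => ?_)
    (h.div_const (γ - θ))
  rw [mul_div_right_comm]
  exact mul_le_mul_of_nonneg_right (mul_exp_le_exp_div_sub hθγ _) (hc n)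

end TiltedSeries

section Renewal

variable {a b f : ℕ → ℝ}

lemma renewal_exp_mul (hren : ∀ n, a n = b n + ∑ p ∈ antidiagonal n, f p.1 * a p.2) (γ : ℝ)
    (n : ℕ) : exp (γ * n) * a n = exp (γ * n) * b n
      + ∑ p ∈ antidiagonal n, exp (γ * p.1) * f p.1 * (exp (γ * p.2) * a p.2) := by
  rw [hren n, mul_add, mul_sum]
  refine congrArg _ (sum_congr rfl fun p hp => ?_)
  rw [← HasAntidiagonal.mem_antidiagonal.1 hp, Nat.cast_add, mul_add, exp_add]
  ring

lemma summable_of_renewal (ha : 0 ≤ a) (hb : 0 ≤ b) (hf : 0 ≤ f)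
    (hren : ∀ n, a n = b n + ∑ p ∈ antidiagonal n, f p.1 * a p.2) (hbs : Summable b)
    (hfs : Summable f) (hf1 : ∑' n, f n < 1) : Summable a := by
  refine summable_of_sum_range_le ha (c := (∑' n, b n) / (1 - ∑' n, f n)) fun N => ?_
  have hA : ∑ n ∈ range N, a n ≤ ∑' n, b n + (∑' n, f n) * ∑ n ∈ range N, a n :=
    calc ∑ n ∈ range N, a n
        = ∑ n ∈ range N, b n + ∑ n ∈ range N, ∑ p ∈ antidiagonal n, f p.1 * a p.2 := by
          rw [← sum_add_distrib]; exact sum_congr rfl fun n _ => hren n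
      _ ≤ ∑' n, b n + (∑ n ∈ range N, f n) * ∑ n ∈ range N, a n :=
          add_le_add (hbs.sum_le_tsum _ fun n _ => hb n) (sum_range_sum_antidiagonal_le hf ha N)
      _ ≤ ∑' n, b n + (∑' n, f n) * ∑ n ∈ range N, a n := by
          gcongr
          · exact sum_nonneg fun n _ => ha n
          · exact hfs.sum_le_tsum _ fun n _ => hf n
  rw [le_div_iff₀ (sub_pos.2 hf1)]
  linarith

lemma summable_exp_mul_succ_of_mem (hf : 0 ≤ f) (hfb : ∀ n, f (n + 1) ≤ b n) {γ : ℝ}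
    (hγ : γ ∈ expSummableSet b) : Summable fun n : ℕ => exp (γ * (n + 1)) * f (n + 1) := by
  refine Summable.of_nonneg_of_le (fun n => mul_nonneg (exp_pos _).le (hf _)) (fun n => ?_)
    (hγ.mul_left (exp γ))
  rw [mul_add, mul_one, exp_add, mul_comm (exp _) (exp γ), mul_assoc]
  exact mul_le_mul_of_nonneg_left
    (mul_le_mul_of_nonneg_left (hfb n) (exp_pos _).le) (exp_pos _).le

lemma one_le_tsum_exp_mul_of_renewal (ha : 0 ≤ a) (hb : 0 ≤ b) (hf : 0 ≤ f) (hf0 : f 0 = 0)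
    (hren : ∀ n, a n = b n + ∑ p ∈ antidiagonal n, f p.1 * a p.2) {γ : ℝ}
    (hγb : γ ∈ expSummableSet b) (hγa : γ ∉ expSummableSet a)
    (hfs : Summable fun n : ℕ => exp (γ * (n + 1)) * f (n + 1)) :
    1 ≤ ∑' n : ℕ, exp (γ * (n + 1)) * f (n + 1) := by
  by_contra! hlt
  have hfs' : Summable fun n : ℕ => exp (γ * n) * f n :=
    (summable_nat_add_iff 1).1 (by simpa only [Nat.cast_succ] using hfs)
  refine hγa (summable_of_renewal (fun n => mul_nonneg (exp_pos _).le (ha n))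
    (fun n => mul_nonneg (exp_pos _).le (hb n)) (fun n => mul_nonneg (exp_pos _).le (hf n))
    (renewal_exp_mul hren γ) hγb hfs' ?_)
  rw [hfs'.tsum_eq_zero_add, hf0, mul_zero, zero_add]
  simpa only [Nat.cast_succ] using hlt

theorem exists_tilt_of_renewal (ha0 : 0 ≤ a) (ha1 : a ≤ 1) (hb : 0 ≤ b) (hf : 0 ≤ f)
    (hf0 : f 0 = 0) (hfb : ∀ n, f (n + 1) ≤ b n) (hf1 : ∀ N, ∑ n ∈ range N, f (n + 1) ≤ 1)
    (hren : ∀ n, a n = b n + ∑ p ∈ antidiagonal n, f p.1 * a p.2)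
    (hlt : sSup ((↑) '' expSummableSet a) < sSup ((↑) '' expSummableSet b : Set EReal)) :
    ∃ θ : ℝ, 0 ≤ θ ∧ (θ : EReal) < sSup ((↑) '' expSummableSet b) ∧
      ∑' n : ℕ, exp (θ * (n + 1)) * f (n + 1) = 1 ∧
      Summable fun n : ℕ => ((n : ℝ) + 1) * exp (θ * (n + 1)) * f (n + 1) := by
  obtain ⟨γ₀, hγ₀a, hγ₀b⟩ := EReal.exists_between_coe_real hlt
  obtain ⟨γ₁, hγ₀₁, hγ₁b⟩ := EReal.exists_between_coe_real hγ₀b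
  have hγ₀ : 0 < γ₀ := EReal.coe_pos.1 ((zero_le_sSup_expSummableSet ha0 ha1).trans_lt hγ₀a)
  have hγ₀₁ : γ₀ < γ₁ := EReal.coe_lt_coe_iff.1 hγ₀₁
  have hγ₁ : γ₁ ∈ expSummableSet b := mem_expSummableSet_of_lt_sSup hb hγ₁b
  have hF₁ := summable_exp_mul_succ_of_mem hf hfb hγ₁
  have hF₀ := summable_exp_mul_succ_of_mem hf hfb (mem_expSummableSet_of_le hb hγ₁ hγ₀₁.le)
  have hF_one_le : 1 ≤ ∑' n : ℕ, exp (γ₀ * (n + 1)) * f (n + 1) :=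
    one_le_tsum_exp_mul_of_renewal ha0 hb hf hf0 hren (mem_expSummableSet_of_le hb hγ₁ hγ₀₁.le)
      (fun h => (le_sSup (Set.mem_image_of_mem (fun γ : ℝ => (γ : EReal)) h)).not_gt hγ₀a) hF₀
  have hF_zero_le : ∑' n : ℕ, exp (0 * (n + 1)) * f (n + 1) ≤ 1 := by
    simpa only [zero_mul, exp_zero, one_mul] using
      Real.tsum_le_of_sum_range_le (fun n => hf (n + 1)) hf1
  obtain ⟨θ, hθ, hθF⟩ := intermediate_value_Icc hγ₀.le
    ((continuousOn_tsum_exp_mul (fun n => hf (n + 1)) hF₀).mono Set.Icc_subset_Iic_self)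
    ⟨hF_zero_le, hF_one_le⟩
  exact ⟨θ, hθ.1, (EReal.coe_le_coe_iff.2 hθ.2).trans_lt hγ₀b, hθF,
    summable_succ_mul_exp_mul (fun n => hf (n + 1)) (hθ.2.trans_lt hγ₀₁) hF₁⟩

end Renewal

namespace SubMarkov

open ENNReal

variable {S : Type*} [DecidableEq S] (P : S → S → ℝ≥0∞) (z : S)

noncomputable def kpow : ℕ → S → S → ℝ≥0∞
  | 0 => fun x y => if x = y then 1 else 0
  | n + 1 => fun x y => ∑' w, kpow n x w * P w y

noncomputable def firstHit : ℕ → S → ℝ≥0∞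
  | 0 => fun _ => 0
  | 1 => fun x => P x z
  | n + 2 => fun x => ∑' w, if w = z then 0 else P x w * firstHit (n + 1) w

noncomputable def taboo : ℕ → S → ℝ≥0∞
  | 0 => fun y => if y = z then 1 else 0
  | j + 1 => fun y => if y = z then 0 else ∑' x, taboo j x * P x y

lemma tsum_taboo_mul_firstHit (j m : ℕ) :
    ∑' y, taboo P z j y * firstHit P z (m + 1) y = ∑' y, taboo P z (j + m) y * P y z := by
  induction m generalizing j with
  | zero => rfl
  | succ m ih =>
    rw [← add_assoc, add_right_comm j m 1, ← ih (j + 1)]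
    calc ∑' y, taboo P z j y * firstHit P z (m + 2) y
        = ∑' w, ∑' y, taboo P z j y * (if w = z then 0 else P y w * firstHit P z (m + 1) w) := by
          rw [ENNReal.tsum_comm]
          exact tsum_congr fun y => ENNReal.tsum_mul_left.symm
      _ = ∑' w, taboo P z (j + 1) w * firstHit P z (m + 1) w := by
          refine tsum_congr fun w => ?_
          by_cases hw : w = z
          · simp [hw, taboo]
          · simp only [hw, if_false, taboo, ← ENNReal.tsum_mul_right, mul_assoc]

lemma firstHit_succ_self (n : ℕ) : firstHit P z (n + 1) z = ∑' y, taboo P z n y * P y z := by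
  rw [← zero_add n, ← tsum_taboo_mul_firstHit, tsum_eq_single z fun y hy => by simp [taboo, hy]]
  simp [taboo]

lemma kpow_eq_taboo_add_sum (n : ℕ) (y : S) :
    kpow P n z y = taboo P z n y + ∑ p ∈ antidiagonal n, firstHit P z p.1 z * kpow P p.2 z y := by
  induction n generalizing y with
  | zero =>
    by_cases h : z = y
    · subst h; simp [kpow, taboo, firstHit]
    · simp [kpow, taboo, firstHit, h, Ne.symm h]
  | succ n ih =>
    have hstep : ∑' x, taboo P z n x * P x y
        = taboo P z (n + 1) y + firstHit P z (n + 1) z * kpow P 0 z y := by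
      by_cases h : z = y
      · subst h; simp [taboo, kpow, firstHit_succ_self]
      · simp [taboo, kpow, h, Ne.symm h]
    calc kpow P (n + 1) z y
        = ∑' x, taboo P z n x * P x y
          + ∑ p ∈ antidiagonal n, firstHit P z p.1 z * ∑' x, kpow P p.2 z x * P x y := by
          simp only [kpow, ih, add_mul, ENNReal.tsum_add, sum_mul, mul_assoc]
          rw [Summable.tsum_finsetSum fun _ _ => ENNReal.summable]
          simp only [ENNReal.tsum_mul_left]
      _ = taboo P z (n + 1) y
          + ∑ p ∈ antidiagonal (n + 1), firstHit P z p.1 z * kpow P p.2 z y := by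
          rw [hstep, Finset.Nat.sum_antidiagonal_succ', add_assoc]
          rfl

variable {P}

lemma tsum_kpow_le_one (hP : ∀ x, ∑' y, P x y ≤ 1) (n : ℕ) (x : S) : ∑' y, kpow P n x y ≤ 1 := by
  induction n with
  | zero => simp [kpow]
  | succ n ih =>
    calc ∑' y, kpow P (n + 1) x y = ∑' w, kpow P n x w * ∑' y, P w y := by
          simp only [kpow]
          rw [ENNReal.tsum_comm]
          exact tsum_congr fun w => ENNReal.tsum_mul_left
      _ ≤ ∑' w, kpow P n x w := ENNReal.tsum_le_tsum fun w => mul_le_of_le_one_right' (hP w)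
      _ ≤ 1 := ih

lemma tsum_taboo_le_one (hP : ∀ x, ∑' y, P x y ≤ 1) (n : ℕ) : ∑' y, taboo P z n y ≤ 1 := by
  induction n with
  | zero => simp [taboo]
  | succ n ih =>
    calc ∑' y, taboo P z (n + 1) y ≤ ∑' y, ∑' x, taboo P z n x * P x y :=
          ENNReal.tsum_le_tsum fun y => by simp only [taboo]; split <;> simp
      _ = ∑' x, taboo P z n x * ∑' y, P x y := by
          rw [ENNReal.tsum_comm]
          exact tsum_congr fun x => ENNReal.tsum_mul_left
      _ ≤ ∑' x, taboo P z n x := ENNReal.tsum_le_tsum fun x => mul_le_of_le_one_right' (hP x)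
      _ ≤ 1 := ih

lemma sum_range_firstHit_le_one (hP : ∀ x, ∑' y, P x y ≤ 1) (N : ℕ) (x : S) :
    ∑ k ∈ range N, firstHit P z (k + 1) x ≤ 1 := by
  induction N generalizing x with
  | zero => simp
  | succ N ih =>
    calc ∑ k ∈ range (N + 1), firstHit P z (k + 1) x
        = P x z + ∑' w, if w = z then 0 else P x w * ∑ k ∈ range N, firstHit P z (k + 1) w := by
          rw [sum_range_succ', add_comm]
          congr 1
          simp only [firstHit, mul_sum]
          rw [← Summable.tsum_finsetSum fun _ _ => ENNReal.summable]
          refine tsum_congr fun w => ?_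
          split_ifs <;> simp
      _ ≤ ∑' w, (if w = z then P x w else 0) + ∑' w, if w = z then 0 else P x w := by
          rw [tsum_ite_eq]
          gcongr with w
          split_ifs
          · rfl
          · exact mul_le_of_le_one_right' (ih w)
      _ ≤ 1 := by
          rw [← ENNReal.tsum_add]
          simpa [ite_add_ite] using hP x

lemma firstHit_succ_self_le (hP : ∀ x, ∑' y, P x y ≤ 1) (n : ℕ) :
    firstHit P z (n + 1) z ≤ ∑' y, taboo P z n y := by
  rw [firstHit_succ_self]
  exact ENNReal.tsum_le_tsum fun y =>
    mul_le_of_le_one_right' ((ENNReal.le_tsum z).trans (hP y))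

lemma kpow_le_one (hP : ∀ x, ∑' y, P x y ≤ 1) (n : ℕ) (x y : S) : kpow P n x y ≤ 1 :=
  (ENNReal.le_tsum y).trans (tsum_kpow_le_one hP n x)

lemma taboo_le_one (hP : ∀ x, ∑' y, P x y ≤ 1) (n : ℕ) (y : S) : taboo P z n y ≤ 1 :=
  (ENNReal.le_tsum y).trans (tsum_taboo_le_one z hP n)

lemma firstHit_le_one (hP : ∀ x, ∑' y, P x y ≤ 1) (n : ℕ) (x : S) : firstHit P z n x ≤ 1 := by
  cases n with
  | zero => simp [firstHit]
  | succ n =>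
    exact (single_le_sum (f := fun k => firstHit P z (k + 1) x) (fun _ _ => zero_le)
      (self_mem_range_succ n)).trans (sum_range_firstHit_le_one z hP (n + 1) x)

lemma toReal_tsum_kpow_eq (hP : ∀ x, ∑' y, P x y ≤ 1) (n : ℕ) :
    (∑' y, kpow P n z y).toReal = (∑' y, taboo P z n y).toReal
      + ∑ p ∈ antidiagonal n, (firstHit P z p.1 z).toReal * (∑' y, kpow P p.2 z y).toReal := by
  have hfin : ∀ p ∈ antidiagonal n, firstHit P z p.1 z * ∑' y, kpow P p.2 z y ≠ ⊤ := fun p _ =>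
    mul_ne_top (ne_top_of_le_ne_top one_ne_top (firstHit_le_one z hP _ _))
      (ne_top_of_le_ne_top one_ne_top (tsum_kpow_le_one hP _ _))
  have htsum : ∑' y, kpow P n z y = ∑' y, taboo P z n y
      + ∑ p ∈ antidiagonal n, firstHit P z p.1 z * ∑' y, kpow P p.2 z y := by
    simp only [kpow_eq_taboo_add_sum P z n, ENNReal.tsum_add, ← ENNReal.tsum_mul_left]
    rw [Summable.tsum_finsetSum fun _ _ => ENNReal.summable]
  rw [htsum, toReal_add (ne_top_of_le_ne_top one_ne_top (tsum_taboo_le_one z hP n))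
    (sum_ne_top.2 hfin), toReal_sum hfin]
  simp only [toReal_mul]

end SubMarkov

noncomputable def ofRealKernel {S : Type*} (B : S → S → ℝ) (x y : S) : ℝ≥0∞ :=
  ENNReal.ofReal (B x y)

lemma tsum_ofRealKernel_le_one {S : Type*} {B : S → S → ℝ} (hnn : ∀ x y, 0 ≤ B x y)
    (hrow : ∀ x, Summable (B x)) (hsub : ∀ x, ∑' y, B x y ≤ 1) (x : S) :
    ∑' y, ofRealKernel B x y ≤ 1 := by
  simp only [ofRealKernel]
  rw [← ENNReal.ofReal_tsum_of_nonneg (hnn x) (hrow x)]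
  exact ENNReal.ofReal_le_one.2 (hsub x)

section RealKernel

open SubMarkov ENNReal

variable {S : Type*} [DecidableEq S] {B : S → S → ℝ} (hnn : ∀ x y, 0 ≤ B x y)
  (hP : ∀ x, ∑' y, ofRealKernel B x y ≤ 1)
include hnn hP

lemma matPow_eq_toReal (n : ℕ) (x y : S) :
    matPow B n x y = (kpow (ofRealKernel B) n x y).toReal := by
  induction n generalizing y with
  | zero => simp only [matPow, kpow]; split_ifs <;> simp
  | succ n ih =>
    simp only [matPow, kpow, ofRealKernel]
    rw [ENNReal.tsum_toReal_eq fun w => mul_ne_top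
      (ne_top_of_le_ne_top one_ne_top (kpow_le_one hP n x w)) ofReal_ne_top]
    simp only [ih, toReal_mul, toReal_ofReal (hnn _ _)]

lemma grow_eq_toReal (z : S) (n : ℕ) (y : S) :
    grow B z n y = (taboo (ofRealKernel B) z n y).toReal := by
  induction n generalizing y with
  | zero => simp only [grow, taboo]; split_ifs <;> simp
  | succ n ih =>
    simp only [grow, taboo, ofRealKernel]
    split_ifs
    · simp
    rw [ENNReal.tsum_toReal_eq fun x => mul_ne_top
      (ne_top_of_le_ne_top one_ne_top (taboo_le_one z hP n x)) ofReal_ne_top]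
    simp only [ih, toReal_mul, toReal_ofReal (hnn _ _)]

lemma fret_eq_toReal (z : S) (n : ℕ) (x : S) :
    fret B z n x = (firstHit (ofRealKernel B) z n x).toReal := by
  induction n using Nat.strong_induction_on generalizing x with
  | _ n ih =>
    match n with
    | 0 => simp [fret, firstHit]
    | 1 => simp [fret, firstHit, ofRealKernel, toReal_ofReal (hnn x z)]
    | m + 2 =>
      simp only [fret, firstHit]
      rw [ENNReal.tsum_toReal_eq fun w => by
        split_ifs
        · exact zero_ne_top
        · exact mul_ne_top ofReal_ne_top
            (ne_top_of_le_ne_top one_ne_top (firstHit_le_one z hP _ w))]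
      refine tsum_congr fun w => ?_
      split_ifs
      · simp
      · rw [ih (m + 1) (by omega), toReal_mul, ofRealKernel, toReal_ofReal (hnn _ _)]

lemma tsum_matPow_eq_toReal (n : ℕ) (x : S) :
    ∑' y, matPow B n x y = (∑' y, kpow (ofRealKernel B) n x y).toReal := by
  rw [ENNReal.tsum_toReal_eq fun y => ne_top_of_le_ne_top one_ne_top (kpow_le_one hP n x y)]
  exact tsum_congr fun y => matPow_eq_toReal hnn hP n x y

lemma tsum_grow_eq_toReal (z : S) (n : ℕ) :
    ∑' y, grow B z n y = (∑' y, taboo (ofRealKernel B) z n y).toReal := by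
  rw [ENNReal.tsum_toReal_eq fun y => ne_top_of_le_ne_top one_ne_top (taboo_le_one z hP n y)]
  exact tsum_congr fun y => grow_eq_toReal hnn hP z n y

lemma tsum_matPow_eq_tsum_grow_add_sum (z : S) (n : ℕ) :
    ∑' y, matPow B n z y = ∑' y, grow B z n y
      + ∑ p ∈ antidiagonal n, fret B z p.1 z * ∑' y, matPow B p.2 z y := by
  rw [tsum_matPow_eq_toReal hnn hP, toReal_tsum_kpow_eq z hP, tsum_grow_eq_toReal hnn hP]
  simp only [fret_eq_toReal hnn hP, tsum_matPow_eq_toReal hnn hP]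

lemma tsum_matPow_le_one (n : ℕ) (x : S) : ∑' y, matPow B n x y ≤ 1 := by
  simpa [tsum_matPow_eq_toReal hnn hP] using toReal_mono one_ne_top (tsum_kpow_le_one hP n x)

lemma fret_succ_self_le_tsum_grow (z : S) (n : ℕ) : fret B z (n + 1) z ≤ ∑' y, grow B z n y := by
  rw [fret_eq_toReal hnn hP, tsum_grow_eq_toReal hnn hP]
  exact toReal_mono (ne_top_of_le_ne_top one_ne_top (tsum_taboo_le_one z hP n))
    (firstHit_succ_self_le z hP n)

lemma sum_range_fret_succ_le_one (z : S) (N : ℕ) (x : S) :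
    ∑ n ∈ range N, fret B z (n + 1) x ≤ 1 := by
  have hfin : ∀ n ∈ range N, firstHit (ofRealKernel B) z (n + 1) x ≠ ⊤ := fun n _ =>
    ne_top_of_le_ne_top one_ne_top (firstHit_le_one z hP _ x)
  simpa [fret_eq_toReal hnn hP, ← toReal_sum hfin] using
    toReal_mono one_ne_top (sum_range_firstHit_le_one z hP N x)

end RealKernel

theorem stmt11_general {S : Type*} [DecidableEq S]
    (B : S → S → ℝ)
    (hnn : ∀ x y, 0 ≤ B x y)
    (hrow : ∀ x, Summable (fun y => B x y))
    (hsub : ∀ x, ∑' y, B x y ≤ 1)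
    (z : S) (θ₁ θ₂ : EReal)
    (hθ₁ : θ₁ = sSup ((fun γ : ℝ => (γ : EReal)) ''
      {γ : ℝ | Summable (fun n : ℕ => Real.exp (γ * (n : ℝ)) * ∑' y, matPow B n z y)}))
    (hθ₂ : θ₂ = sSup ((fun γ : ℝ => (γ : EReal)) ''
      {γ : ℝ | Summable (fun n : ℕ => Real.exp (γ * (n : ℝ)) * ∑' y, grow B z n y)}))
    (hlt : θ₁ < θ₂) :
    ∃ θ : ℝ, 0 ≤ θ ∧ (θ : EReal) < θ₂ ∧
      (∑' n : ℕ, Real.exp (θ * ((n : ℝ) + 1)) * fret B z (n + 1) z = 1) ∧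
      Summable (fun n : ℕ =>
        ((n : ℝ) + 1) * Real.exp (θ * ((n : ℝ) + 1)) * fret B z (n + 1) z) := by
  have hP := tsum_ofRealKernel_le_one hnn hrow hsub
  subst hθ₁ hθ₂
  exact exists_tilt_of_renewal (a := fun n => ∑' y, matPow B n z y)
    (b := fun n => ∑' y, grow B z n y) (f := fun n => fret B z n z)
    (fun n => by simp only [tsum_matPow_eq_toReal hnn hP]; exact ENNReal.toReal_nonneg)
    (tsum_matPow_le_one hnn hP · z)
    (fun n => by simp only [tsum_grow_eq_toReal hnn hP]; exact ENNReal.toReal_nonneg)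
    (fun n => by simp only [fret_eq_toReal hnn hP]; exact ENNReal.toReal_nonneg) rfl
    (fret_succ_self_le_tsum_grow hnn hP z) (sum_range_fret_succ_le_one hnn hP z · z)
    (tsum_matPow_eq_tsum_grow_add_sum hnn hP z) hlt

/-- Theorem 3: with `θ₁ = sup{γ : ∑_n e^{γn} P_z(T > n) < ∞}` and
`θ₂ = sup{γ : ∑_n e^{γn} P_z(T ∧ τ > n) < ∞}` (as extended reals), if `θ₂ > θ₁` then
there exists `θ ≥ 0` (with `θ < θ₂`) satisfying A1 and A2. -/
theorem stmt11 {S : Type*} [Countable S] [Nonempty S] [DecidableEq S]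
    (B : S → S → ℝ)
    (hnn : ∀ x y, 0 ≤ B x y)
    (hrow : ∀ x, Summable (fun y => B x y))
    (hsub : ∀ x, ∑' y, B x y ≤ 1)
    (hirr : ∀ x y, ∃ n, 1 ≤ n ∧ 0 < matPow B n x y)
    (z : S) (θ₁ θ₂ : EReal)
    (hθ₁ : θ₁ = sSup ((fun γ : ℝ => (γ : EReal)) ''
      {γ : ℝ | Summable (fun n : ℕ => Real.exp (γ * (n : ℝ)) * ∑' y, matPow B n z y)}))
    (hθ₂ : θ₂ = sSup ((fun γ : ℝ => (γ : EReal)) ''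
      {γ : ℝ | Summable (fun n : ℕ => Real.exp (γ * (n : ℝ)) * ∑' y, grow B z n y)}))
    (hlt : θ₁ < θ₂) :
    ∃ θ : ℝ, 0 ≤ θ ∧ (θ : EReal) < θ₂ ∧
      (∑' n : ℕ, Real.exp (θ * ((n : ℝ) + 1)) * fret B z (n + 1) z = 1) ∧
      Summable (fun n : ℕ =>
        ((n : ℝ) + 1) * Real.exp (θ * ((n : ℝ) + 1)) * fret B z (n + 1) z) :=
  stmt11_general B hnn hrow hsub z θ₁ θ₂ hθ₁ hθ₂ hlt
end

section
/- (Core estimate of Theorem 5.) Assume A3: there exist v ∈ S and constants 0 < c₁ < c₂ < ∞ such that c₁·B(v,y) ≤ B(x,y) ≤ c₂·B(v,y) for all x, y ∈ S. Let s_v = ∑_{w∈S} B(v,w), ψ(y) = B(v,y)/s_v, δ = c₁·s_v, B̃(x,y) = B(x,y) − δ·ψ(y), and define θ₁^ψ = sup{γ ∈ ℝ : ∑_{n≥0} e^{γn}·(∑_{y∈S} (ψB^n)(y)) < ∞} and θ₂^ψ = sup{γ ∈ ℝ : ∑_{n≥0} e^{γn}·(∑_{y∈S} (ψB̃^n)(y))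 < ∞}. Then θ₁^ψ is finite and θ₂^ψ ≥ θ₁^ψ − log(1 − c₁/c₂); in particular θ₂^ψ > θ₁^ψ. -/
/-- Row iterates `(ψ M^j)(y)`: `(ψ M^0) = ψ`, `(ψ M^{j+1})(y) = ∑_x (ψ M^j)(x) M(x,y)`. -/
noncomputable def rowIter {S : Type*} (ψ : S → ℝ) (M : S → S → ℝ) : ℕ → S → ℝ
  | 0 => ψ
  | j + 1 => fun y => ∑' x, rowIter ψ M j x * M x y

/-- Column sums `(M^j 𝟙)(x) = ∑_y M^j(x,y)`. -/
noncomputable def colSum {S : Type*} [DecidableEq S] (M : S → S → ℝ) (j : ℕ) (x : S) : ℝ :=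
  ∑' y, matPow M j x y

/-- The column eigenvector candidate built from the randomized regeneration structure:
`u*(x) = δ ∑_{k ≥ 1} e^{θ k} (B̃^{k-1} 𝟙)(x)`. -/
noncomputable def uStarPsi {S : Type*} [DecidableEq S] (Bt : S → S → ℝ) (δ θ : ℝ)
    (x : S) : ℝ :=
  δ * ∑' k : ℕ, Real.exp (θ * ((k : ℝ) + 1)) * colSum Bt k x

/-- The row eigenvector candidate built from the randomized regeneration structure:
`η*(y) = ∑_{j ≥ 0} e^{θ j} (ψ B̃^j)(y)`. -/
noncomputable def etaStarPsi {S : Type*} (ψ : S → ℝ) (Bt : S → S → ℝ) (θ : ℝ)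
    (y : S) : ℝ :=
  ∑' j : ℕ, Real.exp (θ * (j : ℝ)) * rowIter ψ Bt j y

/-!
The lower bound in A3 is a Doeblin minorization: every row of `B` dominates `c₁ B(v, ·)`,
whose mass is `δ > 0`, so `∑_y (ψBⁿ)(y) ≥ δⁿ`; with sub-stochasticity this pins `θ₁^ψ`
between `-1` and `-log δ`. Removing the minorant leaves `B̃ = B - c₁ B(v, ·)`, and the upper
bound in A3 gives `B̃ ≤ (1 - c₁/c₂) B` entrywise, hence `ψB̃ⁿ ≤ (1 - c₁/c₂)ⁿ ψBⁿ`, which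
shifts the abscissa of convergence by at least `-log (1 - c₁/c₂) > 0`.
-/

section

variable {S : Type*}

structure IsSubstochastic (M : S → S → ℝ) : Prop where
  nonneg : ∀ x y, 0 ≤ M x y
  summable : ∀ x, Summable (M x)
  tsum_le_one : ∀ x, ∑' y, M x y ≤ 1

namespace IsSubstochastic

variable {M : S → S → ℝ} (hM : IsSubstochastic M) {f : S → ℝ}
include hM

theorem le_one (x y : S) : M x y ≤ 1 :=
  ((hM.summable x).le_tsum y fun j _ => hM.nonneg x j).trans (hM.tsum_le_one x)

theorem summable_mul_right (hf0 : 0 ≤ f) (hf : Summable f) (y : S) :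
    Summable fun x => f x * M x y :=
  Summable.of_nonneg_of_le (fun x => mul_nonneg (hf0 x) (hM.nonneg x y))
    (fun x => mul_le_of_le_one_right (hf0 x) (hM.le_one x y)) hf

theorem tsum_mul_le (hf0 : 0 ≤ f) (x : S) : ∑' y, f x * M x y ≤ f x := by
  rw [tsum_mul_left]
  exact mul_le_of_le_one_right (hf0 x) (hM.tsum_le_one x)

theorem summable_prod_mul (hf0 : 0 ≤ f) (hf : Summable f) :
    Summable fun p : S × S => f p.1 * M p.1 p.2 :=
  (summable_prod_of_nonneg fun p => mul_nonneg (hf0 p.1) (hM.nonneg p.1 p.2)).2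
    ⟨fun x => (hM.summable x).mul_left (f x),
      Summable.of_nonneg_of_le (fun x => tsum_nonneg fun y => mul_nonneg (hf0 x) (hM.nonneg x y))
        (hM.tsum_mul_le hf0) hf⟩

theorem summable_tsum_mul (hf0 : 0 ≤ f) (hf : Summable f) :
    Summable fun y => ∑' x, f x * M x y :=
  (hM.summable_prod_mul hf0 hf).prod_symm.prod

theorem tsum_tsum_mul_le (hf0 : 0 ≤ f) (hf : Summable f) :
    ∑' y, ∑' x, f x * M x y ≤ ∑' x, f x := by
  rw [(hM.summable_prod_mul hf0 hf).tsum_comm]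
  exact Summable.tsum_le_tsum (hM.tsum_mul_le hf0) (hM.summable_prod_mul hf0 hf).prod hf

end IsSubstochastic

section RowIter

variable {ψ φ : S → ℝ} {M Mt : S → S → ℝ}

theorem rowIter_succ (ψ : S → ℝ) (M : S → S → ℝ) (n : ℕ) (y : S) :
    rowIter ψ M (n + 1) y = ∑' x, rowIter ψ M n x * M x y :=
  rfl

theorem rowIter_nonneg (hψ0 : 0 ≤ ψ) (hM0 : ∀ x y, 0 ≤ M x y) : ∀ n, 0 ≤ rowIter ψ M n
  | 0 => hψ0
  | n + 1 => fun y => tsum_nonneg fun x => mul_nonneg (rowIter_nonneg hψ0 hM0 n x) (hM0 x y)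

theorem tsum_rowIter_nonneg (hψ0 : 0 ≤ ψ) (hM0 : ∀ x y, 0 ≤ M x y) (n : ℕ) :
    0 ≤ ∑' y, rowIter ψ M n y :=
  tsum_nonneg (rowIter_nonneg hψ0 hM0 n)

namespace IsSubstochastic

variable (hM : IsSubstochastic M) (hψ0 : 0 ≤ ψ) (hψ : Summable ψ)
include hM hψ0 hψ

theorem summable_rowIter : ∀ n, Summable (rowIter ψ M n)
  | 0 => hψ
  | n + 1 => hM.summable_tsum_mul (rowIter_nonneg hψ0 hM.nonneg n) (summable_rowIter n)

theorem tsum_rowIter_le : ∀ n, ∑' y, rowIter ψ M n y ≤ ∑' y, ψ y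
  | 0 => le_rfl
  | n + 1 => (hM.tsum_tsum_mul_le (rowIter_nonneg hψ0 hM.nonneg n)
      (hM.summable_rowIter hψ0 hψ n)).trans (tsum_rowIter_le n)

theorem rowIter_le_pow_mul {r : ℝ} (hr : 0 ≤ r) (hMt0 : ∀ x y, 0 ≤ Mt x y)
    (hMt : ∀ x y, Mt x y ≤ r * M x y) (n : ℕ) :
    ∀ y, rowIter ψ Mt n y ≤ r ^ n * rowIter ψ M n y := by
  induction n with
  | zero => simp [rowIter]
  | succ n ih =>
    intro y
    have hterm : ∀ x, rowIter ψ Mt n x * Mt x y ≤ r ^ (n + 1) * (rowIter ψ M n x * M x y) :=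
      fun x => calc
        rowIter ψ Mt n x * Mt x y ≤ (r ^ n * rowIter ψ M n x) * (r * M x y) :=
          mul_le_mul (ih x) (hMt x y) (hMt0 x y)
            (mul_nonneg (pow_nonneg hr n) (rowIter_nonneg hψ0 hM.nonneg n x))
        _ = r ^ (n + 1) * (rowIter ψ M n x * M x y) := by ring
    have hsum := (hM.summable_mul_right (rowIter_nonneg hψ0 hM.nonneg n)
      (hM.summable_rowIter hψ0 hψ n) y).mul_left (r ^ (n + 1))
    rw [rowIter_succ, rowIter_succ, ← tsum_mul_left]
    exact Summable.tsum_le_tsum hterm (Summable.of_nonneg_of_le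
      (fun x => mul_nonneg (rowIter_nonneg hψ0 hMt0 n x) (hMt0 x y)) hterm hsum) hsum

theorem tsum_rowIter_le_pow_mul {r : ℝ} (hr : 0 ≤ r) (hMt0 : ∀ x y, 0 ≤ Mt x y)
    (hMt : ∀ x y, Mt x y ≤ r * M x y) (n : ℕ) :
    ∑' y, rowIter ψ Mt n y ≤ r ^ n * ∑' y, rowIter ψ M n y := by
  have hle := hM.rowIter_le_pow_mul hψ0 hψ hr hMt0 hMt n
  have hsum := (hM.summable_rowIter hψ0 hψ n).mul_left (r ^ n)
  rw [← tsum_mul_left]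
  exact Summable.tsum_le_tsum hle (Summable.of_nonneg_of_le (rowIter_nonneg hψ0 hMt0 n) hle hsum)
    hsum

theorem tsum_mul_tsum_rowIter_le (hφ : Summable φ) (hφM : ∀ x y, φ y ≤ M x y) (n : ℕ) :
    (∑' y, φ y) * ∑' x, rowIter ψ M n x ≤ ∑' y, rowIter ψ M (n + 1) y := by
  have hrow : ∀ y, φ y * ∑' x, rowIter ψ M n x ≤ rowIter ψ M (n + 1) y := fun y => by
    rw [mul_comm, ← tsum_mul_right, rowIter_succ]
    exact Summable.tsum_le_tsum
      (fun x => mul_le_mul_of_nonneg_left (hφM x y) (rowIter_nonneg hψ0 hM.nonneg n x))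
      ((hM.summable_rowIter hψ0 hψ n).mul_right (φ y))
      (hM.summable_mul_right (rowIter_nonneg hψ0 hM.nonneg n) (hM.summable_rowIter hψ0 hψ n) y)
  rw [← tsum_mul_right]
  exact Summable.tsum_le_tsum hrow (hφ.mul_right _) (hM.summable_rowIter hψ0 hψ (n + 1))

theorem pow_mul_tsum_le_tsum_rowIter (hφ : Summable φ) (hφ0 : 0 ≤ ∑' y, φ y)
    (hφM : ∀ x y, φ y ≤ M x y) (n : ℕ) :
    (∑' y, φ y) ^ n * ∑' y, ψ y ≤ ∑' y, rowIter ψ M n y := by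
  induction n with
  | zero => simp [rowIter]
  | succ n ih =>
    calc (∑' y, φ y) ^ (n + 1) * ∑' y, ψ y
        = (∑' y, φ y) * ((∑' y, φ y) ^ n * ∑' y, ψ y) := by ring
      _ ≤ (∑' y, φ y) * ∑' y, rowIter ψ M n y := mul_le_mul_of_nonneg_left ih hφ0
      _ ≤ ∑' y, rowIter ψ M (n + 1) y := hM.tsum_mul_tsum_rowIter_le hψ0 hψ hφ hφM n

end IsSubstochastic

end RowIter

section ConvergenceAbscissa

noncomputable def convergenceAbscissa (a : ℕ → ℝ) : EReal :=
  sSup ((fun γ : ℝ => (γ : EReal)) ''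
    {γ : ℝ | Summable fun n : ℕ => Real.exp (γ * n) * a n})

variable {a b : ℕ → ℝ}

theorem coe_le_convergenceAbscissa {γ : ℝ}
    (h : Summable fun n : ℕ => Real.exp (γ * n) * a n) :
    (γ : EReal) ≤ convergenceAbscissa a :=
  le_sSup ⟨γ, h, rfl⟩

theorem convergenceAbscissa_le {t : EReal}
    (h : ∀ γ : ℝ, (Summable fun n : ℕ => Real.exp (γ * n) * a n) → (γ : EReal) ≤ t) :
    convergenceAbscissa a ≤ t :=
  sSup_le fun _ ⟨γ, hγ, hγt⟩ => hγt ▸ h γ hγ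

theorem convergenceAbscissa_ne_bot {C : ℝ} (ha0 : ∀ n, 0 ≤ a n) (haC : ∀ n, a n ≤ C) :
    convergenceAbscissa a ≠ ⊥ := by
  have hgeom : Summable fun n : ℕ => C * Real.exp (-1) ^ n :=
    (summable_geometric_of_lt_one (Real.exp_nonneg _)
      (Real.exp_lt_one_iff.2 (by norm_num))).mul_left C
  have hsum : Summable fun n : ℕ => Real.exp (-1 * n) * a n :=
    Summable.of_nonneg_of_le (fun n => mul_nonneg (Real.exp_nonneg _) (ha0 n)) (fun n => by
      rw [mul_comm (-1 : ℝ), Real.exp_nat_mul, mul_comm C]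
      exact mul_le_mul_of_nonneg_left (haC n) (pow_nonneg (Real.exp_nonneg _) n)) hgeom
  exact ne_bot_of_le_ne_bot (EReal.coe_ne_bot _) (coe_le_convergenceAbscissa hsum)

theorem convergenceAbscissa_le_neg_log {c δ : ℝ} (hc : 0 < c) (hδ : 0 < δ)
    (h : ∀ n, c * δ ^ n ≤ a n) : convergenceAbscissa a ≤ ((-Real.log δ : ℝ) : EReal) := by
  refine convergenceAbscissa_le fun γ hγ => EReal.coe_le_coe_iff.2 (not_lt.1 fun hlt => ?_)
  have hgrowth : 1 ≤ Real.exp γ * δ := by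
    calc 1 = Real.exp (-Real.log δ) * δ := by
          rw [Real.exp_neg, Real.exp_log hδ, inv_mul_cancel₀ hδ.ne']
      _ ≤ Real.exp γ * δ := by gcongr
  have hterm : ∀ n : ℕ, c ≤ Real.exp (γ * n) * a n := fun n => calc
    c ≤ c * (Real.exp γ * δ) ^ n := le_mul_of_one_le_right hc.le (one_le_pow₀ hgrowth)
    _ = Real.exp (γ * n) * (c * δ ^ n) := by rw [mul_comm γ, Real.exp_nat_mul]; ring
    _ ≤ Real.exp (γ * n) * a n := mul_le_mul_of_nonneg_left (h n) (Real.exp_nonneg _)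
  obtain ⟨n, hn⟩ := (hγ.tendsto_atTop_zero.eventually (gt_mem_nhds hc)).exists
  exact (hterm n).not_gt hn

theorem sub_log_le_convergenceAbscissa {r : ℝ} (hr : 0 < r) (hb0 : ∀ n, 0 ≤ b n)
    (hba : ∀ n, b n ≤ r ^ n * a n) :
    convergenceAbscissa a - (Real.log r : EReal) ≤ convergenceAbscissa b := by
  refine EReal.sub_le_of_le_add (convergenceAbscissa_le fun γ hγ => ?_)
  have hshift : Summable fun n : ℕ => Real.exp ((γ - Real.log r) * n) * b n := by
    refine Summable.of_nonneg_of_le (fun n => mul_nonneg (Real.exp_nonneg _) (hb0 n))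
      (fun n => ?_) hγ
    calc Real.exp ((γ - Real.log r) * n) * b n
        ≤ Real.exp ((γ - Real.log r) * n) * (r ^ n * a n) :=
          mul_le_mul_of_nonneg_left (hba n) (Real.exp_nonneg _)
      _ = Real.exp (γ * n) * a n := by
          rw [← Real.exp_log hr, ← Real.exp_nat_mul, Real.log_exp, ← mul_assoc,
            ← Real.exp_add]
          ring_nf
  calc (γ : EReal) = ((γ - Real.log r : ℝ) : EReal) + (Real.log r : EReal) := by
        rw [← EReal.coe_add, sub_add_cancel]
    _ ≤ convergenceAbscissa b + (Real.log r : EReal) :=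
        add_le_add_left (coe_le_convergenceAbscissa hshift) _

end ConvergenceAbscissa

namespace IsSubstochastic

variable {ψ φ : S → ℝ} {M Mt : S → S → ℝ} (hM : IsSubstochastic M) (hψ0 : 0 ≤ ψ)
  (hψ : Summable ψ)
include hM hψ0 hψ

theorem convergenceAbscissa_rowIter_ne_bot :
    convergenceAbscissa (fun n => ∑' y, rowIter ψ M n y) ≠ ⊥ :=
  convergenceAbscissa_ne_bot (tsum_rowIter_nonneg hψ0 hM.nonneg) (hM.tsum_rowIter_le hψ0 hψ)

theorem convergenceAbscissa_rowIter_ne_top (hψ_pos : 0 < ∑' y, ψ y) (hφ : Summable φ)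
    (hφ_pos : 0 < ∑' y, φ y) (hφM : ∀ x y, φ y ≤ M x y) :
    convergenceAbscissa (fun n => ∑' y, rowIter ψ M n y) ≠ ⊤ :=
  ne_top_of_le_ne_top (EReal.coe_ne_top _) <| convergenceAbscissa_le_neg_log hψ_pos hφ_pos
    fun n => mul_comm (∑' y, ψ y) _ ▸
      hM.pow_mul_tsum_le_tsum_rowIter hψ0 hψ hφ hφ_pos.le hφM n

theorem sub_log_le_convergenceAbscissa_rowIter {r : ℝ} (hr : 0 < r) (hMt0 : ∀ x y, 0 ≤ Mt x y)
    (hMt : ∀ x y, Mt x y ≤ r * M x y) :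
    convergenceAbscissa (fun n => ∑' y, rowIter ψ M n y) - (Real.log r : EReal) ≤
      convergenceAbscissa (fun n => ∑' y, rowIter ψ Mt n y) :=
  sub_log_le_convergenceAbscissa hr (tsum_rowIter_nonneg hψ0 hMt0)
    (hM.tsum_rowIter_le_pow_mul hψ0 hψ hr.le hMt0 hMt)

end IsSubstochastic

theorem matPow_succ_zero [DecidableEq S] (n : ℕ) : matPow (0 : S → S → ℝ) (n + 1) = 0 := by
  funext x y
  simp [matPow]

theorem tsum_row_pos_of_irreducible [DecidableEq S] {B : S → S → ℝ} {v : S} {c : ℝ}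
    (hnn : ∀ x y, 0 ≤ B x y) (hv : Summable (B v))
    (hirr : ∀ x y, ∃ n, 1 ≤ n ∧ 0 < matPow B n x y) (hdom : ∀ x y, B x y ≤ c * B v y) :
    0 < ∑' y, B v y := by
  by_contra hnpos
  have hBv : ∀ y, B v y = 0 := fun y =>
    le_antisymm (not_lt.1 fun hy => hnpos (hv.tsum_pos (hnn v) y hy)) (hnn v y)
  have hB : B = 0 := funext₂ fun x y => le_antisymm (by simpa [hBv] using hdom x y) (hnn x y)
  obtain ⟨n, hn, hpos⟩ := hirr v v
  obtain ⟨m, rfl⟩ := Nat.exists_eq_add_of_le' hn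
  simp [hB, matPow_succ_zero] at hpos

theorem sub_mul_le_one_sub_div_mul {a b c₁ c₂ : ℝ} (hc₁ : 0 ≤ c₁) (hc₂ : 0 < c₂)
    (h : b ≤ c₂ * a) : b - c₁ * a ≤ (1 - c₁ / c₂) * b := by
  have : c₁ / c₂ * b ≤ c₁ * a := calc
    c₁ / c₂ * b ≤ c₁ / c₂ * (c₂ * a) := by gcongr
    _ = c₁ * a := by field_simp
  linarith

theorem EReal.lt_sub_coe_of_neg {t : EReal} (ht : t ≠ ⊥) (ht' : t ≠ ⊤) {L : ℝ}
    (hL : L < 0) : t < t - L := by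
  lift t to ℝ using ⟨ht', ht⟩
  exact_mod_cast (by linarith : t < t - L)

end

theorem stmt16_general {S : Type*} [DecidableEq S]
    (B : S → S → ℝ)
    (hnn : ∀ x y, 0 ≤ B x y)
    (hrow : ∀ x, Summable (fun y => B x y))
    (hsub : ∀ x, ∑' y, B x y ≤ 1)
    (hirr : ∀ x y, ∃ n, 1 ≤ n ∧ 0 < matPow B n x y)
    (v : S) (c₁ c₂ : ℝ) (hc₁ : 0 < c₁) (hc : c₁ < c₂)
    (hA3 : ∀ x y, c₁ * B v y ≤ B x y ∧ B x y ≤ c₂ * B v y)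
    (sv : ℝ) (hsv : sv = ∑' w, B v w)
    (ψ : S → ℝ) (hψ : ∀ y, ψ y = B v y / sv)
    (δ : ℝ) (hδ : δ = c₁ * sv)
    (Bt : S → S → ℝ) (hBt : ∀ x y, Bt x y = B x y - δ * ψ y)
    (θ₁ θ₂ : EReal)
    (hθ₁ : θ₁ = sSup ((fun γ : ℝ => (γ : EReal)) ''
      {γ : ℝ | Summable (fun n : ℕ => Real.exp (γ * (n : ℝ)) * ∑' y, rowIter ψ B n y)}))
    (hθ₂ : θ₂ = sSup ((fun γ : ℝ => (γ : EReal)) ''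
      {γ : ℝ | Summable (fun n : ℕ => Real.exp (γ * (n : ℝ)) * ∑' y, rowIter ψ Bt n y)}))
    :
    θ₁ ≠ ⊥ ∧ θ₁ ≠ ⊤ ∧
    θ₂ ≥ θ₁ - ((Real.log (1 - c₁ / c₂) : ℝ) : EReal) ∧
    θ₁ < θ₂ := by
  have hc₂ : 0 < c₂ := hc₁.trans hc
  have hB : IsSubstochastic B := ⟨hnn, hrow, hsub⟩
  have hsv_pos : 0 < sv :=
    hsv ▸ tsum_row_pos_of_irreducible hnn (hrow v) hirr fun x y => (hA3 x y).2
  have hψ0 : 0 ≤ ψ := fun y => (hψ y).symm ▸ div_nonneg (hnn v y) hsv_pos.le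
  have hψs : Summable ψ := ((hrow v).div_const sv).congr fun y => (hψ y).symm
  have hψ1 : ∑' y, ψ y = 1 := by
    rw [tsum_congr hψ, tsum_div_const, ← hsv, div_self hsv_pos.ne']
  have hBt_eq : ∀ x y, Bt x y = B x y - c₁ * B v y := fun x y => by
    rw [hBt, hδ, hψ]
    field_simp
  have hr : 0 < 1 - c₁ / c₂ := sub_pos.2 ((div_lt_one hc₂).2 hc)
  have hgap : θ₁ - (Real.log (1 - c₁ / c₂) : EReal) ≤ θ₂ := hθ₁ ▸ hθ₂ ▸
    hB.sub_log_le_convergenceAbscissa_rowIter hψ0 hψs hr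
      (fun x y => hBt_eq x y ▸ sub_nonneg.2 (hA3 x y).1)
      (fun x y => hBt_eq x y ▸ sub_mul_le_one_sub_div_mul hc₁.le hc₂ (hA3 x y).2)
  have hθ₁_ne_bot : θ₁ ≠ ⊥ := hθ₁ ▸ hB.convergenceAbscissa_rowIter_ne_bot hψ0 hψs
  have hθ₁_ne_top : θ₁ ≠ ⊤ := hθ₁ ▸ hB.convergenceAbscissa_rowIter_ne_top hψ0 hψs
    (hψ1 ▸ one_pos) ((hrow v).mul_left c₁) (by rw [tsum_mul_left, ← hsv]; positivity)
    fun x y => (hA3 x y).1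
  have hlog : Real.log (1 - c₁ / c₂) < 0 :=
    Real.log_neg hr (sub_lt_self _ (div_pos hc₁ hc₂))
  exact ⟨hθ₁_ne_bot, hθ₁_ne_top, hgap,
    (EReal.lt_sub_coe_of_neg hθ₁_ne_bot hθ₁_ne_top hlog).trans_le hgap⟩

/-- Core estimate of Theorem 5: under A3 with `c₁ < c₂`, the abscissa `θ₁^ψ` is finite
and `θ₂^ψ ≥ θ₁^ψ - log(1 - c₁/c₂)`; in particular `θ₂^ψ > θ₁^ψ`. -/
theorem stmt16 {S : Type*} [Countable S] [Nonempty S] [DecidableEq S]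
    (B : S → S → ℝ)
    (hnn : ∀ x y, 0 ≤ B x y)
    (hrow : ∀ x, Summable (fun y => B x y))
    (hsub : ∀ x, ∑' y, B x y ≤ 1)
    (hirr : ∀ x y, ∃ n, 1 ≤ n ∧ 0 < matPow B n x y)
    (v : S) (c₁ c₂ : ℝ) (hc₁ : 0 < c₁) (hc : c₁ < c₂)
    (hA3 : ∀ x y, c₁ * B v y ≤ B x y ∧ B x y ≤ c₂ * B v y)
    (sv : ℝ) (hsv : sv = ∑' w, B v w)
    (ψ : S → ℝ) (hψ : ∀ y, ψ y = B v y / sv)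
    (δ : ℝ) (hδ : δ = c₁ * sv)
    (Bt : S → S → ℝ) (hBt : ∀ x y, Bt x y = B x y - δ * ψ y)
    (θ₁ θ₂ : EReal)
    (hθ₁ : θ₁ = sSup ((fun γ : ℝ => (γ : EReal)) ''
      {γ : ℝ | Summable (fun n : ℕ => Real.exp (γ * (n : ℝ)) * ∑' y, rowIter ψ B n y)}))
    (hθ₂ : θ₂ = sSup ((fun γ : ℝ => (γ : EReal)) ''
      {γ : ℝ | Summable (fun n : ℕ => Real.exp (γ * (n : ℝ)) * ∑' y, rowIter ψ Bt n y)}))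
    :
    θ₁ ≠ ⊥ ∧ θ₁ ≠ ⊤ ∧
    θ₂ ≥ θ₁ - ((Real.log (1 - c₁ / c₂) : ℝ) : EReal) ∧
    θ₁ < θ₂ :=
  stmt16_general B hnn hrow hsub hirr v c₁ c₂ hc₁ hc hA3 sv hsv ψ hψ δ hδ Bt hBt θ₁ θ₂ hθ₁ hθ₂
end
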